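/- arXiv:1512.00080 — 3 statements merged into one kernel-verified Lean document; each statement's English description precedes it below -/
import Mathlib

section
/- Let P be the formal power series in three variables x, y, z over the rationals whose coefficient of x^a y^b z^c equals 1 if a, b, c are positive integers with min(a,b,c) = 1 and max(a,b,c) ≥ 2, and equals 0 otherwise. Then (P + xyz) · ((1-x)(1-y)(1-z) + xyz) = xyz · (1 + P) as formal power series; equivalently, (P + xyz)/(1 + P) = xyz / ((1-x)(1-y)(1-z) + xyz). -/
/-!
Write `M = ∏ X i` and `S = P + M`. The exponents of `S` are exactly those `d ≥ 1` with
`min d = 1`, i.e. the lattice points of the cone `d ≥ 1` minus those of the cone `d ≥ 2`, so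
`S = (M - M²) · ∑_d X^d`. The all-ones series `∑_d X^d` is the inverse of `∏ (1 - X i)`, hence
`S · ∏ (1 - X i) = M - M²`, and the identity follows by adding `S · M = P · M + M²`.
-/

open MvPowerSeries

@[simp]
theorem Finsupp.sum_univ_single_apply {σ : Type*} [Fintype σ] (k : ℕ) (a : σ) :
    (∑ i, Finsupp.single i k : σ →₀ ℕ) a = k := by
  classical
  simp [Finsupp.finsetSum_apply, Finsupp.single_apply]

theorem Finsupp.sum_univ_single_le_iff {σ : Type*} [Fintype σ] (k : ℕ) (d : σ →₀ ℕ) :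
    ∑ i, Finsupp.single i k ≤ d ↔ ∀ i, k ≤ d i := by
  simp [Finsupp.le_def]

theorem pos_min_eq_one_max_ge_two_iff {σ : Type*} (d : σ → ℕ) :
    ((∀ a, 1 ≤ d a) ∧ (∃ a, d a = 1) ∧ (∃ a, 2 ≤ d a)) ↔
      (∀ a, 1 ≤ d a) ∧ ¬(∀ a, 2 ≤ d a) ∧ ¬(∀ a, d a = 1) := by
  refine and_congr_right fun hpos => and_congr ?_ ?_ <;> push Not <;>
    exact exists_congr fun a => by have := hpos a; omega

namespace MvPowerSeries

variable {σ R : Type*}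

def allOnes (σ R : Type*) [One R] : MvPowerSeries σ R := fun _ => 1

@[simp]
theorem coeff_allOnes [Semiring R] (d : σ →₀ ℕ) : coeff d (allOnes σ R) = 1 := rfl

theorem coeff_mul_one_sub_X [CommRing R] (f : MvPowerSeries σ R) (i : σ)
    (d : σ →₀ ℕ) :
    coeff d (f * (1 - X i)) =
      coeff d f - if 1 ≤ d i then coeff (d - Finsupp.single i 1) f else 0 := by
  rw [mul_sub, mul_one, map_sub, X_def, coeff_mul_monomial]
  simp only [Finsupp.single_le_iff, mul_one]

theorem coeff_allOnes_mul_prod_one_sub_X [CommRing R] [DecidableEq σ] (s : Finset σ)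
    (d : σ →₀ ℕ) :
    coeff d (allOnes σ R * ∏ i ∈ s, (1 - X i)) = if ∀ j ∈ s, d j = 0 then 1 else 0 := by
  induction s using Finset.induction_on generalizing d with
  | empty => simp
  | insert i s hi ih =>
    have shift : (∀ j ∈ s, (d - Finsupp.single i 1 : σ →₀ ℕ) j = 0) ↔ ∀ j ∈ s, d j = 0 := by
      refine forall₂_congr fun j hj => ?_
      rw [Finsupp.tsub_apply, Finsupp.single_eq_of_ne (by rintro rfl; exact hi hj), Nat.sub_zero]
    rw [Finset.prod_insert hi, mul_left_comm, mul_comm, coeff_mul_one_sub_X, ih, ih]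
    simp only [shift, Finset.forall_mem_insert]
    by_cases hs : ∀ j ∈ s, d j = 0 <;> by_cases hd : d i = 0 <;>
      simp [hs, hd, Nat.one_le_iff_ne_zero]

theorem allOnes_mul_prod_one_sub_X [CommRing R] [Fintype σ] :
    allOnes σ R * ∏ i, (1 - X i) = 1 := by
  classical
  ext d
  rw [coeff_allOnes_mul_prod_one_sub_X, coeff_one]
  simp [Finsupp.ext_iff]

theorem prod_X_pow_eq_monomial [CommSemiring R] [Fintype σ] (k : ℕ) :
    ∏ i, (X i : MvPowerSeries σ R) ^ k = monomial (∑ i, Finsupp.single i k) 1 := by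
  simp_rw [X_pow_eq, prod_monomial, Finset.prod_const_one]

theorem coeff_monomial_mul_allOnes [Semiring R] (n d : σ →₀ ℕ) :
    coeff d (monomial n 1 * allOnes σ R) = if n ≤ d then 1 else 0 := by
  rw [coeff_monomial_mul, coeff_allOnes, mul_one]

section MinOneExponents

variable [Fintype σ] [Nonempty σ] [CommRing R]

theorem add_prod_X_eq_mul_allOnes (P : MvPowerSeries σ R)
    (hP : ∀ d : σ →₀ ℕ, coeff d P =
      if (∀ a, 1 ≤ d a) ∧ (∃ a, d a = 1) ∧ (∃ a, 2 ≤ d a) then 1 else 0) :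
    P + ∏ i, X i = (∏ i, X i - (∏ i, X i) ^ 2) * allOnes σ R := by
  classical
  ext d
  have hM : ∏ i, (X i : MvPowerSeries σ R) = monomial (∑ i, Finsupp.single i 1) 1 := by
    simpa only [pow_one] using prod_X_pow_eq_monomial (R := R) 1
  rw [← Finset.prod_pow, prod_X_pow_eq_monomial, hM, sub_mul, map_sub, map_add, hP,
    coeff_monomial_mul_allOnes, coeff_monomial_mul_allOnes, coeff_monomial]
  simp only [Finsupp.sum_univ_single_le_iff, Finsupp.ext_iff, Finsupp.sum_univ_single_apply,
    pos_min_eq_one_max_ge_two_iff]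
  by_cases hB : ∀ a, 2 ≤ d a
  · obtain ⟨a⟩ := ‹Nonempty σ›
    have hE : ¬∀ a, d a = 1 := fun h => by have := hB a; have := h a; omega
    simp [hB, hE, fun a => (hB a).trans' one_le_two]
  · by_cases hE : ∀ a, d a = 1 <;> simp [hB, hE]

theorem add_prod_X_mul_prod_one_sub_X_add_prod_X (P : MvPowerSeries σ R)
    (hP : ∀ d : σ →₀ ℕ, coeff d P =
      if (∀ a, 1 ≤ d a) ∧ (∃ a, d a = 1) ∧ (∃ a, 2 ≤ d a) then 1 else 0) :
    (P + ∏ i, X i) * (∏ i, (1 - X i) + ∏ i, X i) = (∏ i, X i) * (1 + P) := by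
  have key : (P + ∏ i, X i) * ∏ i, (1 - X i) = ∏ i, X i - (∏ i, X i) ^ 2 := by
    rw [add_prod_X_eq_mul_allOnes P hP, mul_assoc, allOnes_mul_prod_one_sub_X, mul_one]
  linear_combination key

end MinOneExponents

end MvPowerSeries

/-- The generating function identity for homology facets:
`(P + xyz)·((1-x)(1-y)(1-z) + xyz) = xyz·(1 + P)`, i.e.
`(P + xyz)/(1 + P) = xyz/((1-x)(1-y)(1-z) + xyz)`. -/
theorem homology_facet_generating_function (P : MvPowerSeries (Fin 3) ℚ)
    (hP : ∀ d : Fin 3 →₀ ℕ,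
      MvPowerSeries.coeff d P =
        if (∀ a : Fin 3, 1 ≤ d a) ∧ (∃ a : Fin 3, d a = 1) ∧ (∃ a : Fin 3, 2 ≤ d a)
        then 1 else 0) :
    (P + X 0 * X 1 * X 2) * ((1 - X 0) * (1 - X 1) * (1 - X 2) + X 0 * X 1 * X 2) =
      X 0 * X 1 * X 2 * (1 + P) := by
  simpa only [Fin.prod_univ_three] using
    add_prod_X_mul_prod_one_sub_X_add_prod_X P (by convert hP)
end

section
/- For every natural number n, the coefficient of x^n y^n z^n in the formal power series inverse of 1 - (x + y + z) + (xy + yz + zx) (a power series with constant term 1, hence invertible) equals ∑_{s=0}^{n} (-1)^s (binom(n,s))^3. -/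
/-!
With `P = ∏ i, (1 - X i)` and `U = ∏ i, X i / (1 - X i)`, the series is `P * (1 + U)`, so its
inverse is `∑ s, (-U) ^ s / P = ∑ s, (-1) ^ s * ∏ i, X i ^ s / (1 - X i) ^ (s + 1)`, and the
coefficient of `X ^ n` in `X ^ s / (1 - X) ^ (s + 1)` is `n.choose s`. To stay within finite sums,
the geometric series is truncated at `N = d i + 1`: the remainder is divisible by `X i ^ N`, so it
does not contribute to the coefficient of `X ^ d`.
-/

open MvPowerSeries

theorem PowerSeries.coeff_X_pow_mul_mk_one_pow_succ {R : Type*} [CommRing R] (n s : ℕ) :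
    coeff n (X ^ s * mk 1 ^ (s + 1) : PowerSeries R) = n.choose s := by
  rw [mk_one_pow_eq_mk_choose_add, coeff_X_pow_mul', coeff_mk]
  split_ifs with h
  · rw [Nat.add_sub_cancel' h]
  · rw [Nat.choose_eq_zero_of_lt (not_le.mp h), Nat.cast_zero]

namespace MvPowerSeries

variable {σ R : Type*} [Fintype σ] [CommSemiring R]

/-- The product `∏ i, f i (X i)` of univariate power series in separate variables. -/
noncomputable def prodUnivariate (f : σ → PowerSeries R) : MvPowerSeries σ R :=
  fun d ↦ ∏ i, PowerSeries.coeff (d i) (f i)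

theorem coeff_prodUnivariate (f : σ → PowerSeries R) (d : σ →₀ ℕ) :
    coeff d (prodUnivariate f) = ∏ i, PowerSeries.coeff (d i) (f i) := rfl

theorem prodUnivariate_one : prodUnivariate (1 : σ → PowerSeries R) = 1 := by
  classical
  ext d
  simp only [coeff_prodUnivariate, Pi.one_apply, PowerSeries.coeff_one, Finset.prod_boole,
    Finset.mem_univ, true_implies, coeff_one, Finsupp.ext_iff, Finsupp.coe_zero, Pi.zero_apply]

theorem prodUnivariate_mul (f g : σ → PowerSeries R) :
    prodUnivariate (f * g) = prodUnivariate f * prodUnivariate g := by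
  classical
  ext d
  simp only [coeff_prodUnivariate, coeff_mul, Pi.mul_apply, PowerSeries.coeff_mul,
    Finset.prod_univ_sum, ← Finset.prod_mul_distrib]
  refine Finset.sum_nbij' (fun x ↦ (Finsupp.equivFunOnFinite.symm fun i ↦ (x i).1,
      Finsupp.equivFunOnFinite.symm fun i ↦ (x i).2)) (fun p i ↦ (p.1 i, p.2 i))
    ?_ ?_ (fun _ _ ↦ rfl) (fun _ _ ↦ by ext <;> rfl) (fun _ _ ↦ rfl) <;>
  simp [Finsupp.ext_iff]

noncomputable def prodUnivariateHom : (σ → PowerSeries R) →* MvPowerSeries σ R where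
  toFun := prodUnivariate
  map_one' := prodUnivariate_one
  map_mul' := prodUnivariate_mul

theorem prodUnivariate_pow (f : σ → PowerSeries R) (n : ℕ) :
    prodUnivariate f ^ n = prodUnivariate (f ^ n) :=
  (map_pow prodUnivariateHom f n).symm

theorem prodUnivariate_eq_prod_mulSingle [DecidableEq σ] (f : σ → PowerSeries R) :
    prodUnivariate f = ∏ i, prodUnivariate (Pi.mulSingle i (f i)) := by
  conv_lhs => rw [← Finset.univ_prod_mulSingle f]
  exact map_prod prodUnivariateHom _ _

theorem coeff_prodUnivariate_mulSingle [DecidableEq σ] (i : σ) (p : PowerSeries R)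
    (d : σ →₀ ℕ) :
    coeff d (prodUnivariate (Pi.mulSingle i p)) =
      PowerSeries.coeff (d i) p * ∏ j ∈ Finset.univ.erase i, PowerSeries.coeff (d j) 1 := by
  rw [coeff_prodUnivariate, ← Finset.mul_prod_erase _ _ (Finset.mem_univ i),
    Pi.mulSingle_eq_same]
  congr 1
  exact Finset.prod_congr rfl fun j hj ↦ by rw [Pi.mulSingle_eq_of_ne (Finset.ne_of_mem_erase hj)]

theorem prodUnivariate_mulSingle_X [DecidableEq σ] (i : σ) :
    prodUnivariate (Pi.mulSingle i PowerSeries.X) = (X i : MvPowerSeries σ R) := by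
  ext d
  simp only [coeff_prodUnivariate_mulSingle, PowerSeries.coeff_X, PowerSeries.coeff_one,
    Finset.prod_boole, Finset.mem_erase, Finset.mem_univ, and_true, mul_ite, mul_one, mul_zero,
    ← ite_and, coeff_X, Finsupp.ext_iff, Finsupp.single_apply]
  congr 1
  grind

theorem prodUnivariate_mulSingle_sub {R : Type*} [CommRing R] [DecidableEq σ] (i : σ)
    (p q : PowerSeries R) :
    prodUnivariate (Pi.mulSingle i (p - q)) =
      prodUnivariate (Pi.mulSingle i p) - prodUnivariate (Pi.mulSingle i q) := by
  ext d
  simp only [map_sub, coeff_prodUnivariate_mulSingle, sub_mul]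

theorem prod_X_eq_prodUnivariate :
    ∏ i, (X i : MvPowerSeries σ R) = prodUnivariate fun _ ↦ PowerSeries.X := by
  classical
  rw [prodUnivariate_eq_prod_mulSingle]
  simp only [prodUnivariate_mulSingle_X]

theorem prod_one_sub_X_eq_prodUnivariate {R : Type*} [CommRing R] :
    ∏ i, (1 - X i : MvPowerSeries σ R) = prodUnivariate fun _ ↦ 1 - PowerSeries.X := by
  classical
  rw [prodUnivariate_eq_prod_mulSingle]
  simp only [prodUnivariate_mulSingle_sub, prodUnivariate_mulSingle_X, Pi.mulSingle_one,
    prodUnivariate_one]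

theorem prod_one_sub_X_add_prod_X_mul_prodUnivariate_mk_one {R : Type*} [CommRing R] :
    (∏ i, (1 - X i) + ∏ i, X i) * prodUnivariate (fun _ : σ ↦ PowerSeries.mk 1) =
      1 + prodUnivariate fun _ ↦ PowerSeries.X * PowerSeries.mk (1 : ℕ → R) := by
  have hinv : ((fun _ ↦ 1 - PowerSeries.X) * fun _ ↦ PowerSeries.mk 1 : σ → PowerSeries R) = 1 :=
    funext fun _ ↦ by rw [Pi.mul_apply, mul_comm]; exact PowerSeries.mk_one_mul_one_sub_eq_one R
  rw [add_mul, prod_one_sub_X_eq_prodUnivariate, prod_X_eq_prodUnivariate,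
    ← prodUnivariate_mul, ← prodUnivariate_mul, hinv, prodUnivariate_one]
  rfl

theorem coeff_prodUnivariate_X_mul_mk_one_pow_mul {R : Type*} [CommRing R] (s : ℕ)
    (d : σ →₀ ℕ) :
    coeff d ((prodUnivariate fun _ ↦ PowerSeries.X * PowerSeries.mk 1) ^ s *
        prodUnivariate fun _ ↦ PowerSeries.mk 1) = ∏ j, ((d j).choose s : R) := by
  rw [prodUnivariate_pow, ← prodUnivariate_mul, coeff_prodUnivariate]
  refine Finset.prod_congr rfl fun j _ ↦ ?_
  rw [← PowerSeries.coeff_X_pow_mul_mk_one_pow_succ]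
  congr 1
  simp only [Pi.mul_apply, Pi.pow_apply]
  ring

theorem X_pow_dvd_prodUnivariate_X_mul_pow (i : σ) (g : PowerSeries R) (N : ℕ) :
    X i ^ N ∣ (prodUnivariate fun _ ↦ PowerSeries.X * g) ^ N := by
  refine X_pow_dvd_iff.2 fun m hm ↦ ?_
  rw [prodUnivariate_pow, coeff_prodUnivariate]
  refine Finset.prod_eq_zero (Finset.mem_univ i) ?_
  simp [mul_pow, PowerSeries.coeff_X_pow_mul', hm]

theorem coeff_inv_prod_one_sub_X_add_prod_X {k : Type*} [Field k] (d : σ →₀ ℕ) (i : σ) :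
    coeff d (∏ j, (1 - X j) + ∏ j, X j : MvPowerSeries σ k)⁻¹ =
      ∑ s ∈ Finset.range (d i + 1), (-1) ^ s * ∏ j, ((d j).choose s : k) := by
  set Q : MvPowerSeries σ k := ∏ j, (1 - X j) + ∏ j, X j
  set V := prodUnivariate fun _ : σ ↦ PowerSeries.mk (1 : ℕ → k)
  set U := prodUnivariate fun _ : σ ↦ PowerSeries.X * PowerSeries.mk (1 : ℕ → k)
  set N := d i + 1
  have hQ : constantCoeff Q ≠ 0 := by
    simp [Q, Finset.prod_eq_zero (Finset.mem_univ i)]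
  have hQV : Q * V = 1 + U := prod_one_sub_X_add_prod_X_mul_prodUnivariate_mk_one
  have hpartial : ∑ s ∈ Finset.range N, (-U) ^ s * V = Q⁻¹ - (-U) ^ N * Q⁻¹ := by
    rw [← one_sub_mul, ← geom_sum_mul_neg, sub_neg_eq_add, ← hQV, Finset.sum_mul,
      Finset.sum_mul]
    refine Finset.sum_congr rfl fun s _ ↦ ?_
    rw [mul_comm Q V, mul_assoc, mul_assoc, MvPowerSeries.mul_inv_cancel _ hQ, mul_one]
  have htail : coeff d ((-U) ^ N * Q⁻¹) = 0 := by
    have hdvd : X i ^ N ∣ (-U) ^ N * Q⁻¹ := by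
      rw [neg_pow]
      exact ((X_pow_dvd_prodUnivariate_X_mul_pow i _ N).mul_left _).mul_right _
    exact X_pow_dvd_iff.1 hdvd d (Nat.lt_succ_self _)
  rw [eq_sub_iff_add_eq] at hpartial
  rw [← hpartial, map_add, htail, add_zero, map_sum]
  refine Finset.sum_congr rfl fun s _ ↦ ?_
  rw [neg_pow, mul_assoc, ← coeff_prodUnivariate_X_mul_mk_one_pow_mul s d,
    show (-1 : MvPowerSeries σ k) ^ s = C ((-1) ^ s) by simp, coeff_C_mul]

end MvPowerSeries

/-- The coefficient of `xⁿyⁿzⁿ` in `1/((1-x)(1-y)(1-z) + xyz)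
= 1/(1 - (x+y+z) + (xy+yz+zx))` is the alternating sum of cubes of binomial
coefficients. -/
theorem diag_coeff_inv (n : ℕ) :
    MvPowerSeries.coeff
        (Finsupp.single (0 : Fin 3) n + Finsupp.single 1 n + Finsupp.single 2 n)
        ((1 - (X 0 + X 1 + X 2) + (X 0 * X 1 + X 1 * X 2 + X 2 * X 0) :
            MvPowerSeries (Fin 3) ℚ)⁻¹) =
      ∑ s ∈ Finset.range (n + 1), (-1 : ℚ) ^ s * (n.choose s : ℚ) ^ 3 := by
  have hfactor : (1 - (X 0 + X 1 + X 2) + (X 0 * X 1 + X 1 * X 2 + X 2 * X 0) :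
      MvPowerSeries (Fin 3) ℚ) = ∏ j, (1 - X j) + ∏ j, X j := by
    simp only [Fin.prod_univ_three]
    ring
  rw [hfactor, coeff_inv_prod_one_sub_X_add_prod_X _ 0]
  simp [Fin.prod_univ_three, pow_three, mul_assoc]
end

section
/- For every natural number n, the coefficient of the monomial x^n y^n z^n in the polynomial ((x - y)(y - z)(z - x))^n equals ∑_{s=0}^{n} (-1)^s (binom(n,s))^3. -/
open MvPolynomial Finset Finsupp

lemma expandXsub (n : ℕ) (i j : Fin 3) :
    (X i - X j : MvPolynomial (Fin 3) ℤ) ^ n =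
      ∑ a ∈ range (n + 1),
        monomial (Finsupp.single i a + Finsupp.single j (n - a))
          ((-1 : ℤ) ^ (a + n) * n.choose a) := by
  rw [sub_pow]
  refine Finset.sum_congr rfl fun a _ => ?_
  rw [X_pow_eq_monomial, X_pow_eq_monomial]
  calc (-1 : MvPolynomial (Fin 3) ℤ) ^ (a + n) * monomial (Finsupp.single i a) 1 *
        monomial (Finsupp.single j (n - a)) 1 * (n.choose a : MvPolynomial (Fin 3) ℤ)
      = C ((-1 : ℤ) ^ (a + n) * n.choose a) *
          (monomial (Finsupp.single i a) 1 * monomial (Finsupp.single j (n - a)) 1) := by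
        simp only [C_mul, C_pow, C_neg, C_1, map_natCast]
        ring
    _ = _ := by rw [monomial_mul, C_mul_monomial]; ring_nf

/-- The MacMahon Master Theorem step: the coefficient of `xⁿyⁿzⁿ` in
`((x-y)(y-z)(z-x))ⁿ` is the alternating sum of cubes of binomial coefficients. -/
theorem diag_coeff_pow (n : ℕ) :
    MvPolynomial.coeff
        (Finsupp.single (0 : Fin 3) n + Finsupp.single 1 n + Finsupp.single 2 n)
        (((X 0 - X 1) * (X 1 - X 2) * (X 2 - X 0) : MvPolynomial (Fin 3) ℤ) ^ n) =
      ∑ s ∈ Finset.range (n + 1), (-1 : ℤ) ^ s * (n.choose s : ℤ) ^ 3 := by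
  rw [mul_pow, mul_pow, expandXsub, expandXsub, expandXsub]
  simp only [Finset.sum_mul, Finset.mul_sum, monomial_mul, coeff_sum, coeff_monomial]
  have key : ∀ c ∈ Finset.range (n+1), ∀ b ∈ Finset.range (n+1), ∀ a ∈ Finset.range (n+1),
      ((Finsupp.single (0:Fin 3) a + Finsupp.single 1 (n-a)
          + (Finsupp.single 1 b + Finsupp.single 2 (n-b))
          + (Finsupp.single 2 c + Finsupp.single 0 (n-c)))
        = Finsupp.single (0:Fin 3) n + Finsupp.single 1 n + Finsupp.single 2 n)
        ↔ (b = c ∧ a = c) := by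
    intro c hc b hb a ha
    simp only [Finset.mem_range] at hc hb ha
    constructor
    · intro h
      have h0 := DFunLike.congr_fun h 0
      have h1 := DFunLike.congr_fun h 1
      have h2 := DFunLike.congr_fun h 2
      simp [Finsupp.single_apply] at h0 h1 h2
      omega
    · rintro ⟨rfl, rfl⟩
      ext x
      fin_cases x <;> simp [Finsupp.single_apply] <;> omega
  rw [show (∑ s ∈ Finset.range (n + 1), (-1 : ℤ) ^ s * (n.choose s : ℤ) ^ 3)
      = ∑ s ∈ Finset.range (n + 1), (-1 : ℤ) ^ (n + 1 - 1 - s) * (n.choose (n + 1 - 1 - s) : ℤ) ^ 3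
    from (Finset.sum_range_reflect _ _).symm]
  refine Finset.sum_congr rfl fun c hc => ?_
  have hc' : c ≤ n := by simpa using Finset.mem_range_succ_iff.mp hc
  calc (∑ b ∈ Finset.range (n+1), ∑ a ∈ Finset.range (n+1),
        if (Finsupp.single (0:Fin 3) a + Finsupp.single 1 (n-a)
          + (Finsupp.single 1 b + Finsupp.single 2 (n-b))
          + (Finsupp.single 2 c + Finsupp.single 0 (n-c)))
          = Finsupp.single (0:Fin 3) n + Finsupp.single 1 n + Finsupp.single 2 n then
          (-1:ℤ) ^ (a + n) * (n.choose a : ℤ) * ((-1) ^ (b + n) * (n.choose b : ℤ))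
            * ((-1) ^ (c + n) * (n.choose c : ℤ)) else 0)
      = ∑ b ∈ Finset.range (n+1), ∑ a ∈ Finset.range (n+1),
          if a = c then (if b = c then
          (-1:ℤ) ^ (a + n) * (n.choose a : ℤ) * ((-1) ^ (b + n) * (n.choose b : ℤ))
            * ((-1) ^ (c + n) * (n.choose c : ℤ)) else 0) else 0 := by
        refine Finset.sum_congr rfl fun b hb => Finset.sum_congr rfl fun a ha => ?_
        simp only [key c hc b hb a ha]
        by_cases h1 : a = c <;> by_cases h2 : b = c <;> simp [h1, h2]
    _ = (-1:ℤ) ^ (n + 1 - 1 - c) * (n.choose (n + 1 - 1 - c) : ℤ) ^ 3 := by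
        simp only [Finset.sum_ite_eq' (Finset.range (n+1)) c, hc, if_pos]
        have hch : (n.choose (n + 1 - 1 - c) : ℤ) = n.choose c := by
          rw [show n + 1 - 1 - c = n - c by omega, Nat.choose_symm hc']
        have hsg : ((-1:ℤ)) ^ (n + 1 - 1 - c) = (-1) ^ (c + n) := by
          rw [show c + n = (n + 1 - 1 - c) + 2 * c by omega, pow_add, pow_mul]
          simp
        rw [hch, hsg]
        ring_nf
        rw [show c * 3 = c + 2 * c from by ring, show n * 3 = n + 2 * n from by ring,
          pow_add, pow_add, pow_mul, pow_mul]
        simp only [neg_one_sq, one_pow, mul_one]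
end
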